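/- arXiv:2101.00799 — 12 statements merged into one kernel-verified Lean document; each statement's English description precedes it below -/
import Mathlib

section
/- Let A, C, μ ∈ ℝ and σ, σ_W > 0. On the product probability space Ω = ℝ × ℝ equipped with the product measure (gaussianReal μ σ²) ⊗ (gaussianReal 0 σ_W²), let M(m,w) = m, W(m,w) = w and Y = A·M + C + W. Then the conditional expectation of M given the σ-algebra generated by Y equals K·Y + L almost everywhere, where K = Aσ²/(A²σ² + σ_W²) and L = (σ_W²μ − ACσ²)/(A²σ² + σ_W²). -/
/-!
Write `Y = A M + C + W` and `K`, `L` as in the statement. The estimation error `M - (K Y + L)`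
and the observation `Y` are linear combinations of the independent Gaussians `M` and `W`, so
they are jointly Gaussian; `K` is chosen so that they are uncorrelated, hence independent, and
`L` so that the error has mean zero. Conditioning on `Y` therefore leaves only `K Y + L`.
-/

open MeasureTheory ProbabilityTheory
open scoped NNReal

namespace ProbabilityTheory

variable {Ω : Type*} [MeasurableSpace Ω] {P : Measure Ω}

lemma IndepFun.covariance_linearCombination [IsProbabilityMeasure P] {X W : Ω → ℝ}
    (hX : MemLp X 2 P) (hW : MemLp W 2 P) (hXW : IndepFun X W P) (a b c d : ℝ) :
    cov[fun ω ↦ a * X ω + b * W ω, fun ω ↦ c * X ω + d * W ω; P]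
      = a * c * Var[X; P] + b * d * Var[W; P] := by
  have hcov : cov[X, W; P] = 0 := hXW.covariance_eq_zero hX hW
  change cov[(fun ω ↦ a * X ω) + (fun ω ↦ b * W ω),
    (fun ω ↦ c * X ω) + (fun ω ↦ d * W ω); P] = _
  rw [covariance_add_left (hX.const_mul a) (hW.const_mul b)
      ((hX.const_mul c).add (hW.const_mul d)),
    covariance_add_right (hX.const_mul a) (hX.const_mul c) (hW.const_mul d),
    covariance_add_right (hW.const_mul b) (hX.const_mul c) (hW.const_mul d)]
  simp only [covariance_const_mul_left, covariance_const_mul_right,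
    covariance_self hX.aemeasurable, covariance_self hW.aemeasurable, hcov, covariance_comm W X]
  ring

lemma IndepFun.indepFun_linearCombination_of_hasGaussianLaw {X W : Ω → ℝ}
    (hX : HasGaussianLaw X P) (hW : HasGaussianLaw W P) (hXW : IndepFun X W P) {a b c d : ℝ}
    (h : a * c * Var[X; P] + b * d * Var[W; P] = 0) :
    IndepFun (fun ω ↦ a * X ω + b * W ω) (fun ω ↦ c * X ω + d * W ω) P := by
  have := hX.isProbabilityMeasure
  let L : ℝ × ℝ →L[ℝ] ℝ × ℝ :=
    (a • ContinuousLinearMap.fst ℝ ℝ ℝ + b • ContinuousLinearMap.snd ℝ ℝ ℝ).prod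
      (c • ContinuousLinearMap.fst ℝ ℝ ℝ + d • ContinuousLinearMap.snd ℝ ℝ ℝ)
  refine HasGaussianLaw.indepFun_of_covariance_eq_zero
    ((hXW.hasGaussianLaw hX hW).map_fun L) ?_
  rw [hXW.covariance_linearCombination hX.memLp_two hW.memLp_two, h]

lemma condExp_comap_eq_of_indepFun_sub [IsProbabilityMeasure P] {β : Type*} [MeasurableSpace β]
    {X : Ω → ℝ} {Y : Ω → β} {f : β → ℝ} (hX : Measurable X) (hXi : Integrable X P)
    (hY : Measurable Y) (hf : Measurable f) (hfY : Integrable (fun ω ↦ f (Y ω)) P)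
    (hXY : IndepFun (fun ω ↦ X ω - f (Y ω)) Y P) :
    P[X | MeasurableSpace.comap Y inferInstance]
      =ᵐ[P] fun ω ↦ P[fun ω ↦ X ω - f (Y ω)] + f (Y ω) := by
  set Z := fun ω ↦ X ω - f (Y ω)
  have hZ : Measurable Z := hX.sub (hf.comp hY)
  have hfY_meas : StronglyMeasurable[MeasurableSpace.comap Y inferInstance] (fun ω ↦ f (Y ω)) :=
    (hf.comp (comap_measurable Y)).stronglyMeasurable
  have hZ_indep : P[Z | MeasurableSpace.comap Y inferInstance] =ᵐ[P] fun _ ↦ P[Z] :=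
    condExp_indep_eq hZ.comap_le hY.comap_le (comap_measurable Z).stronglyMeasurable hXY
  have hXZ : X = Z + fun ω ↦ f (Y ω) := by ext ω; simp [Z]
  have hZi : Integrable Z P := hXi.sub hfY
  filter_upwards [condExp_add hZi hfY (MeasurableSpace.comap Y inferInstance), hZ_indep]
    with ω hadd hZω
  rw [hXZ, hadd, Pi.add_apply, hZω, condExp_of_stronglyMeasurable hY.comap_le hfY_meas hfY]

theorem condExp_comap_affine_observation_of_hasLaw_gaussianReal {X W : Ω → ℝ} {μ A C : ℝ}
    {v₁ v₂ : ℝ≥0} (hX : HasLaw X (gaussianReal μ v₁) P)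
    (hW : HasLaw W (gaussianReal 0 v₂) P)
    (hXm : Measurable X) (hWm : Measurable W) (hXW : IndepFun X W P)
    (hD : A ^ 2 * v₁ + v₂ ≠ 0) :
    P[X | MeasurableSpace.comap (fun ω ↦ A * X ω + C + W ω) inferInstance]
      =ᵐ[P] fun ω ↦ A * v₁ / (A ^ 2 * v₁ + v₂) * (A * X ω + C + W ω)
        + (v₂ * μ - A * C * v₁) / (A ^ 2 * v₁ + v₂) := by
  set K := A * v₁ / (A ^ 2 * v₁ + v₂)
  set L := (v₂ * μ - A * C * v₁) / (A ^ 2 * v₁ + v₂)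
  have := hX.isProbabilityMeasure
  have hXi : Integrable X P := hX.hasGaussianLaw.integrable
  have hWi : Integrable W P := hW.hasGaussianLaw.integrable
  have hind : IndepFun (fun ω ↦ X ω - (K * (A * X ω + C + W ω) + L))
      (fun ω ↦ A * X ω + C + W ω) P := by
    have hcov : (1 - K * A) * A * Var[X; P] + -K * 1 * Var[W; P] = 0 := by
      rw [hX.variance_eq, hW.variance_eq, variance_id_gaussianReal, variance_id_gaussianReal]
      simp only [K]
      field_simp
      ring
    convert (hXW.indepFun_linearCombination_of_hasGaussianLaw hX.hasGaussianLaw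
      hW.hasGaussianLaw hcov).comp (measurable_add_const (-(K * C + L)))
        (measurable_add_const C) using 1 <;>
      funext ω <;> simp only [Function.comp_apply] <;> ring
  have hmean : P[fun ω ↦ X ω - (K * (A * X ω + C + W ω) + L)] = 0 := by
    rw [integral_sub (by fun_prop) (by fun_prop), integral_add (by fun_prop) (by fun_prop),
      integral_const_mul, integral_add (by fun_prop) hWi,
      integral_add (by fun_prop) (by fun_prop), integral_const_mul, hX.integral_eq,
      hW.integral_eq, integral_id_gaussianReal, integral_id_gaussianReal]
    simp only [integral_const, probReal_univ, smul_eq_mul, one_mul, K, L]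
    field_simp
    ring
  filter_upwards [condExp_comap_eq_of_indepFun_sub (f := fun y ↦ K * y + L) hXm hXi
    (by fun_prop) (by fun_prop) (by fun_prop) hind] with ω hω
  rw [hω, hmean, zero_add]

theorem condExp_fst_comap_affine_gaussianReal_prod {μ A C : ℝ} {v₁ v₂ : ℝ≥0}
    (hD : A ^ 2 * v₁ + v₂ ≠ 0) :
    ((gaussianReal μ v₁).prod (gaussianReal 0 v₂))[Prod.fst |
        MeasurableSpace.comap (fun p : ℝ × ℝ ↦ A * p.1 + C + p.2) inferInstance]
      =ᵐ[(gaussianReal μ v₁).prod (gaussianReal 0 v₂)]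
        fun p ↦ A * v₁ / (A ^ 2 * v₁ + v₂) * (A * p.1 + C + p.2)
          + (v₂ * μ - A * C * v₁) / (A ^ 2 * v₁ + v₂) :=
  condExp_comap_affine_observation_of_hasLaw_gaussianReal measurePreserving_fst.hasLaw
    measurePreserving_snd.hasLaw measurable_fst measurable_snd
    (indepFun_prod₀ aemeasurable_id aemeasurable_id) hD

end ProbabilityTheory

theorem stmt0_general (A C μ σ σW : ℝ) (hσW : 0 < σW) :
    let ν : Measure (ℝ × ℝ) :=
      (gaussianReal μ ⟨σ ^ 2, sq_nonneg σ⟩).prod (gaussianReal 0 ⟨σW ^ 2, sq_nonneg σW⟩)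
    let M : ℝ × ℝ → ℝ := fun p => p.1
    let Y : ℝ × ℝ → ℝ := fun p => A * p.1 + C + p.2
    let K : ℝ := A * σ ^ 2 / (A ^ 2 * σ ^ 2 + σW ^ 2)
    let L : ℝ := (σW ^ 2 * μ - A * C * σ ^ 2) / (A ^ 2 * σ ^ 2 + σW ^ 2)
    ν[M | MeasurableSpace.comap Y inferInstance] =ᵐ[ν] fun ω => K * Y ω + L := by
  intro ν M Y K L
  exact condExp_fst_comap_affine_gaussianReal_prod
    (by show A ^ 2 * σ ^ 2 + σW ^ 2 ≠ 0; positivity)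

theorem stmt0 (A C μ σ σW : ℝ) (hσ : 0 < σ) (hσW : 0 < σW) :
    let ν : Measure (ℝ × ℝ) :=
      (gaussianReal μ ⟨σ ^ 2, sq_nonneg σ⟩).prod (gaussianReal 0 ⟨σW ^ 2, sq_nonneg σW⟩)
    let M : ℝ × ℝ → ℝ := fun p => p.1
    let Y : ℝ × ℝ → ℝ := fun p => A * p.1 + C + p.2
    let K : ℝ := A * σ ^ 2 / (A ^ 2 * σ ^ 2 + σW ^ 2)
    let L : ℝ := (σW ^ 2 * μ - A * C * σ ^ 2) / (A ^ 2 * σ ^ 2 + σW ^ 2)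
    ν[M | MeasurableSpace.comap Y inferInstance] =ᵐ[ν] fun ω => K * Y ω + L :=
  stmt0_general A C μ σ σW hσW
end

section
/- Let μ_e, μ_d, C, A ∈ ℝ, σ_e, σ_d, σ_W > 0, λ > 0, and set δ = μ_e − μ_d, K = Aσ_d²/(A²σ_d² + σ_W²), L = (σ_W²μ_d − ACσ_d²)/(A²σ_d² + σ_W²). For (m,w) distributed according to (gaussianReal μ_e σ_e²) ⊗ (gaussianReal 0 σ_W²) and u = K(Am + C + w) + L, the expectation of (m − u)² + λ(Am + C)² equals σ_W⁴(σ_e² + δ² − σ_d²)/(A²σ_d² + σ_W²)² + σ_d²σ_W²/(A²σ_d² + σ_W²) + λA²σ_e² + λ(Aμ_e + C)². -/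
/-!
Both `m - u` and the transmitted signal `A m + C` are affine in the independent pair `(m, w)`.
The second moment of `a m + b w + c` is its variance plus its squared mean; by independence the
variances add, giving `a² σe² + b² σW² + (a μe + c)²`. Substituting `K` and `L` then leaves an
identity of rational functions.
-/

open MeasureTheory ProbabilityTheory

namespace ProbabilityTheory

variable {μ ν : Measure ℝ} [IsProbabilityMeasure μ] [IsProbabilityMeasure ν]

lemma memLp_two_affine_prod (hμ : MemLp id 2 μ) (hν : MemLp id 2 ν) (a b c : ℝ) :
    MemLp (fun p : ℝ × ℝ ↦ a * p.1 + b * p.2 + c) 2 (μ.prod ν) :=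
  (((hμ.comp_fst ν).const_mul a).add ((hν.comp_snd μ).const_mul b)).add (memLp_const c)

lemma integral_sq_affine_prod (hμ : MemLp id 2 μ) (hν : MemLp id 2 ν) (a b c : ℝ) :
    ∫ p, (a * p.1 + b * p.2 + c) ^ 2 ∂(μ.prod ν)
      = a ^ 2 * Var[id; μ] + b ^ 2 * Var[id; ν] + (a * ∫ x, x ∂μ + b * ∫ y, y ∂ν + c) ^ 2 := by
  have hX := memLp_two_affine_prod hμ hν a b c
  have hvar : Var[fun p : ℝ × ℝ ↦ a * p.1 + b * p.2 + c; μ.prod ν]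
      = a ^ 2 * Var[id; μ] + b ^ 2 * Var[id; ν] := by
    have hsplit : (fun p : ℝ × ℝ ↦ a * p.1 + b * p.2 + c)
        = fun p ↦ (fun x ↦ a * x + c) p.1 + (fun y ↦ b * y) p.2 := by
      funext p; ring
    have hXμ : MemLp (fun x ↦ a * x + c) 2 μ := (hμ.const_mul a).add (memLp_const c)
    have hYν : MemLp (fun y ↦ b * y) 2 ν := hν.const_mul b
    rw [hsplit, variance_add_prod hXμ hYν]
    change Var[fun x ↦ a * id x + c; μ] + Var[fun y ↦ b * id y; ν] = _
    rw [variance_add_const (hμ.const_mul a).aestronglyMeasurable, variance_const_mul,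
      variance_const_mul]
  have hmean : ∫ p, (a * p.1 + b * p.2 + c) ∂(μ.prod ν)
      = a * ∫ x, x ∂μ + b * ∫ y, y ∂ν + c := by
    have h1 : Integrable (fun p : ℝ × ℝ ↦ p.1) (μ.prod ν) :=
      (hμ.integrable one_le_two).comp_fst ν
    have h2 : Integrable (fun p : ℝ × ℝ ↦ p.2) (μ.prod ν) :=
      (hν.integrable one_le_two).comp_snd μ
    rw [integral_add (f := fun p : ℝ × ℝ ↦ a * p.1 + b * p.2)
        ((h1.const_mul a).add (h2.const_mul b)) (integrable_const c),
      integral_add (f := fun p : ℝ × ℝ ↦ a * p.1) (h1.const_mul a) (h2.const_mul b),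
      integral_const_mul, integral_const_mul, integral_fun_fst (fun x ↦ x),
      integral_fun_snd (fun y ↦ y)]
    simp
  have hsecond := variance_eq_sub hX
  simp only [Pi.pow_apply] at hsecond
  rw [← hmean]
  linarith

lemma integral_sq_affine_gaussianReal_prod (m₁ m₂ σ₁ σ₂ a b c : ℝ) :
    let ν := (gaussianReal m₁ ⟨σ₁ ^ 2, sq_nonneg σ₁⟩).prod (gaussianReal m₂ ⟨σ₂ ^ 2, sq_nonneg σ₂⟩)
    Integrable (fun p : ℝ × ℝ ↦ (a * p.1 + b * p.2 + c) ^ 2) ν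
      ∧ ∫ p, (a * p.1 + b * p.2 + c) ^ 2 ∂ν
        = a ^ 2 * σ₁ ^ 2 + b ^ 2 * σ₂ ^ 2 + (a * m₁ + b * m₂ + c) ^ 2 := by
  -- `⟨σ ^ 2, _⟩` elaborates at type `{r // 0 ≤ r}`, not `ℝ≥0`, which hides it from instance
  -- search and from `rw`; hence the explicit instances and `erw` below.
  have : IsProbabilityMeasure (gaussianReal m₁ ⟨σ₁ ^ 2, sq_nonneg σ₁⟩) :=
    instIsProbabilityMeasureGaussianReal _ _
  have : IsProbabilityMeasure (gaussianReal m₂ ⟨σ₂ ^ 2, sq_nonneg σ₂⟩) :=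
    instIsProbabilityMeasureGaussianReal _ _
  have hm₁ := memLp_id_gaussianReal' (μ := m₁) (v := ⟨σ₁ ^ 2, sq_nonneg σ₁⟩) 2 (by simp)
  have hm₂ := memLp_id_gaussianReal' (μ := m₂) (v := ⟨σ₂ ^ 2, sq_nonneg σ₂⟩) 2 (by simp)
  refine ⟨(memLp_two_affine_prod hm₁ hm₂ a b c).integrable_sq, ?_⟩
  rw [integral_sq_affine_prod hm₁ hm₂]
  erw [variance_id_gaussianReal, variance_id_gaussianReal, integral_id_gaussianReal,
    integral_id_gaussianReal]
  rfl

end ProbabilityTheory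

theorem stmt1_general (μe μd C A σe σd σW lam : ℝ)
    (hσW : 0 < σW) :
    let δ : ℝ := μe - μd
    let K : ℝ := A * σd ^ 2 / (A ^ 2 * σd ^ 2 + σW ^ 2)
    let L : ℝ := (σW ^ 2 * μd - A * C * σd ^ 2) / (A ^ 2 * σd ^ 2 + σW ^ 2)
    let ν : Measure (ℝ × ℝ) :=
      (gaussianReal μe ⟨σe ^ 2, sq_nonneg σe⟩).prod (gaussianReal 0 ⟨σW ^ 2, sq_nonneg σW⟩)
    ∫ p, ((p.1 - (K * (A * p.1 + C + p.2) + L)) ^ 2 + lam * (A * p.1 + C) ^ 2) ∂ν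
      = σW ^ 4 * (σe ^ 2 + δ ^ 2 - σd ^ 2) / (A ^ 2 * σd ^ 2 + σW ^ 2) ^ 2
        + σd ^ 2 * σW ^ 2 / (A ^ 2 * σd ^ 2 + σW ^ 2)
        + lam * A ^ 2 * σe ^ 2 + lam * (A * μe + C) ^ 2 := by
  intro δ K L ν
  obtain ⟨hint₁, hval₁⟩ := integral_sq_affine_gaussianReal_prod μe 0 σe σW
    (1 - K * A) (-K) (-(K * C + L))
  obtain ⟨hint₂, hval₂⟩ := integral_sq_affine_gaussianReal_prod μe 0 σe σW A 0 C
  have hcost : (fun p : ℝ × ℝ ↦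
        (p.1 - (K * (A * p.1 + C + p.2) + L)) ^ 2 + lam * (A * p.1 + C) ^ 2)
      = fun p ↦ ((1 - K * A) * p.1 + (-K) * p.2 + -(K * C + L)) ^ 2
        + lam * (A * p.1 + 0 * p.2 + C) ^ 2 := by
    funext p; ring
  rw [hcost, integral_add hint₁ (hint₂.const_mul lam), integral_const_mul, hval₁, hval₂]
  have hD : A ^ 2 * σd ^ 2 + σW ^ 2 ≠ 0 := by positivity
  simp only [δ, K, L]
  field_simp
  ring

theorem stmt1 (μe μd C A σe σd σW lam : ℝ)
    (hσe : 0 < σe) (hσd : 0 < σd) (hσW : 0 < σW) (hlam : 0 < lam) :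
    let δ : ℝ := μe - μd
    let K : ℝ := A * σd ^ 2 / (A ^ 2 * σd ^ 2 + σW ^ 2)
    let L : ℝ := (σW ^ 2 * μd - A * C * σd ^ 2) / (A ^ 2 * σd ^ 2 + σW ^ 2)
    let ν : Measure (ℝ × ℝ) :=
      (gaussianReal μe ⟨σe ^ 2, sq_nonneg σe⟩).prod (gaussianReal 0 ⟨σW ^ 2, sq_nonneg σW⟩)
    ∫ p, ((p.1 - (K * (A * p.1 + C + p.2) + L)) ^ 2 + lam * (A * p.1 + C) ^ 2) ∂ν
      = σW ^ 4 * (σe ^ 2 + δ ^ 2 - σd ^ 2) / (A ^ 2 * σd ^ 2 + σW ^ 2) ^ 2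
        + σd ^ 2 * σW ^ 2 / (A ^ 2 * σd ^ 2 + σW ^ 2)
        + lam * A ^ 2 * σe ^ 2 + lam * (A * μe + C) ^ 2 :=
  stmt1_general μe μd C A σe σd σW lam hσW
end

section
/- Let μ_e, μ_d, C, A ∈ ℝ, σ_e, σ_d, σ_W > 0 and set δ = μ_e − μ_d, K = Aσ_d²/(A²σ_d² + σ_W²), L = (σ_W²μ_d − ACσ_d²)/(A²σ_d² + σ_W²). For (m,w) distributed according to (gaussianReal μ_e σ_e²) ⊗ (gaussianReal 0 σ_W²) and u = K(Am + C + w) + L, the expectation of (m − u)² equals (A²σ_d⁴σ_W² + σ_W⁴(σ_e² + δ²))/(A²σ_d² + σ_W²)²; in particular this value does not depend on C. -/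
/-!
The estimation error `m - u = (1 - K A) m - K w - (K C + L)` is an affine combination of the
independent Gaussians `m` and `w`, hence Gaussian with mean `(1 - K A) μe - (K C + L)` and variance
`(1 - K A)² σe² + K² σW²`. Its second moment is variance plus squared mean, and substituting `K`
and `L` gives the formula; `C` drops out because `K C + L = σW² μd / (A² σd² + σW²)`.
-/

open MeasureTheory ProbabilityTheory
open scoped NNReal

namespace ProbabilityTheory

lemma integral_sq_gaussianReal (μ : ℝ) (v : ℝ≥0) :
    ∫ x, x ^ 2 ∂gaussianReal μ v = v + μ ^ 2 := by
  have h := variance_eq_sub (memLp_id_gaussianReal (μ := μ) (v := v) 2)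
  rw [variance_id_gaussianReal] at h
  simp only [Pi.pow_apply, id_eq, integral_id_gaussianReal] at h
  linarith

lemma gaussianReal_prod_map_affine (μ₁ μ₂ : ℝ) (v₁ v₂ : ℝ≥0) (a b c : ℝ) :
    ((gaussianReal μ₁ v₁).prod (gaussianReal μ₂ v₂)).map (fun p ↦ a * p.1 + b * p.2 + c)
      = gaussianReal (a * μ₁ + b * μ₂ + c)
          (.mk (a ^ 2) (sq_nonneg a) * v₁ + .mk (b ^ 2) (sq_nonneg b) * v₂) := by
  have hcomp : (fun p : ℝ × ℝ ↦ a * p.1 + b * p.2 + c)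
      = (· + c) ∘ (fun q : ℝ × ℝ ↦ q.1 + q.2) ∘ Prod.map (a * ·) (b * ·) := rfl
  rw [hcomp, ← Measure.map_map (by fun_prop) (by fun_prop),
    ← Measure.map_map (by fun_prop) (by fun_prop),
    ← Measure.map_prod_map _ _ (by fun_prop) (by fun_prop),
    gaussianReal_map_const_mul, gaussianReal_map_const_mul, ← Measure.conv,
    gaussianReal_conv_gaussianReal, gaussianReal_map_add_const]

lemma integral_sq_affine_gaussianReal_prod_s2 (μ₁ μ₂ : ℝ) (v₁ v₂ : ℝ≥0) (a b c : ℝ) :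
    ∫ p, (a * p.1 + b * p.2 + c) ^ 2 ∂(gaussianReal μ₁ v₁).prod (gaussianReal μ₂ v₂)
      = a ^ 2 * v₁ + b ^ 2 * v₂ + (a * μ₁ + b * μ₂ + c) ^ 2 := by
  have h := integral_map (f := fun x : ℝ ↦ x ^ 2)
    (μ := (gaussianReal μ₁ v₁).prod (gaussianReal μ₂ v₂))
    (φ := fun p ↦ a * p.1 + b * p.2 + c) (by fun_prop) (by fun_prop)
  rw [← h, gaussianReal_prod_map_affine, integral_sq_gaussianReal]
  simp only [NNReal.coe_add, NNReal.coe_mul, NNReal.coe_mk]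

end ProbabilityTheory

theorem stmt2_general (μe μd C A σe σd σW : ℝ)
    (hσW : 0 < σW) :
    let δ : ℝ := μe - μd
    let K : ℝ := A * σd ^ 2 / (A ^ 2 * σd ^ 2 + σW ^ 2)
    let L : ℝ := (σW ^ 2 * μd - A * C * σd ^ 2) / (A ^ 2 * σd ^ 2 + σW ^ 2)
    let ν : Measure (ℝ × ℝ) :=
      (gaussianReal μe ⟨σe ^ 2, sq_nonneg σe⟩).prod (gaussianReal 0 ⟨σW ^ 2, sq_nonneg σW⟩)
    ∫ p, (p.1 - (K * (A * p.1 + C + p.2) + L)) ^ 2 ∂ν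
      = (A ^ 2 * σd ^ 4 * σW ^ 2 + σW ^ 4 * (σe ^ 2 + δ ^ 2))
          / (A ^ 2 * σd ^ 2 + σW ^ 2) ^ 2 := by
  intro δ K L ν
  have hD : A ^ 2 * σd ^ 2 + σW ^ 2 ≠ 0 := by positivity
  have herror : ∀ p : ℝ × ℝ, p.1 - (K * (A * p.1 + C + p.2) + L)
      = (1 - K * A) * p.1 + (-K) * p.2 + -(K * C + L) := fun p ↦ by ring
  simp_rw [herror]
  refine (integral_sq_affine_gaussianReal_prod_s2 μe 0 (.mk (σe ^ 2) (sq_nonneg σe))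
    (.mk (σW ^ 2) (sq_nonneg σW)) _ _ _).trans ?_
  simp only [NNReal.coe_mk, K, L, δ]
  field_simp
  ring

theorem stmt2 (μe μd C A σe σd σW : ℝ)
    (hσe : 0 < σe) (hσd : 0 < σd) (hσW : 0 < σW) :
    let δ : ℝ := μe - μd
    let K : ℝ := A * σd ^ 2 / (A ^ 2 * σd ^ 2 + σW ^ 2)
    let L : ℝ := (σW ^ 2 * μd - A * C * σd ^ 2) / (A ^ 2 * σd ^ 2 + σW ^ 2)
    let ν : Measure (ℝ × ℝ) :=
      (gaussianReal μe ⟨σe ^ 2, sq_nonneg σe⟩).prod (gaussianReal 0 ⟨σW ^ 2, sq_nonneg σW⟩)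
    ∫ p, (p.1 - (K * (A * p.1 + C + p.2) + L)) ^ 2 ∂ν
      = (A ^ 2 * σd ^ 4 * σW ^ 2 + σW ^ 4 * (σe ^ 2 + δ ^ 2))
          / (A ^ 2 * σd ^ 2 + σW ^ 2) ^ 2 :=
  stmt2_general μe μd C A σe σd σW hσW
end

section
/- Let σ_e, σ_d, σ_W > 0, λ > 0, δ ∈ ℝ, and define f : [0,∞) → ℝ by f(t) = σ_W⁴(σ_e² + δ² − σ_d²)/(tσ_d² + σ_W²)² + σ_d²σ_W²/(tσ_d² + σ_W²) + λσ_e²t. If λσ_e²σ_W² < σ_d²(2σ_e² + 2δ² − σ_d²), then there exists t > 0 with f(t) < f(0). -/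
/-! The right derivative of `f` at `0` is
`(lam σe² σW² - σd² (2 σe² + 2 δ² - σd²)) / σW²`, which the hypothesis makes negative,
so `f` drops below `f 0` immediately to the right of `0`. -/

open Set

theorem exists_lt_of_hasDerivWithinAt_Ioi_neg {f : ℝ → ℝ} {f' x : ℝ}
    (hf : HasDerivWithinAt f f' (Ioi x) x) (hf' : f' < 0) : ∃ t > x, f t < f x := by
  have hslope := (hasDerivWithinAt_iff_tendsto_slope' (s := Ioi x) (lt_irrefl x)).1 hf
  obtain ⟨t, hneg, hxt⟩ :=
    ((hslope.eventually (gt_mem_nhds hf')).and self_mem_nhdsWithin).exists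
  refine ⟨t, hxt, ?_⟩
  rw [slope_def_field] at hneg
  exact sub_neg.1 (neg_of_div_neg_left hneg (sub_pos.2 hxt).le)

/-- `f(A²)` of the paper, as a function of `t = A²`. -/
noncomputable def affineEncoderCost (σe σd σW lam δ t : ℝ) : ℝ :=
  σW ^ 4 * (σe ^ 2 + δ ^ 2 - σd ^ 2) / (t * σd ^ 2 + σW ^ 2) ^ 2
    + σd ^ 2 * σW ^ 2 / (t * σd ^ 2 + σW ^ 2) + lam * σe ^ 2 * t

theorem hasDerivAt_affineEncoderCost_zero (σe σd lam δ : ℝ) {σW : ℝ} (hσW : σW ≠ 0) :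
    HasDerivAt (affineEncoderCost σe σd σW lam δ)
      ((lam * σe ^ 2 * σW ^ 2 - σd ^ 2 * (2 * σe ^ 2 + 2 * δ ^ 2 - σd ^ 2)) / σW ^ 2) 0 := by
  have hs : HasDerivAt (fun t : ℝ => t * σd ^ 2 + σW ^ 2) (σd ^ 2) 0 := by
    simpa using ((hasDerivAt_id (0 : ℝ)).mul_const (σd ^ 2)).add_const (σW ^ 2)
  have hs0 : (0 : ℝ) * σd ^ 2 + σW ^ 2 ≠ 0 := by simpa using hσW
  have hf := (((hasDerivAt_const (0 : ℝ) (σW ^ 4 * (σe ^ 2 + δ ^ 2 - σd ^ 2))).fun_div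
    (hs.fun_pow 2) (pow_ne_zero 2 hs0)).add
      ((hasDerivAt_const (0 : ℝ) (σd ^ 2 * σW ^ 2)).fun_div hs hs0)).add
    ((hasDerivAt_id (0 : ℝ)).const_mul (lam * σe ^ 2))
  refine hf.congr_deriv ?_
  norm_num
  field_simp
  ring

theorem stmt3_general (σe σd σW lam δ : ℝ)
    (hσW : 0 < σW)
    (h : lam * σe ^ 2 * σW ^ 2 < σd ^ 2 * (2 * σe ^ 2 + 2 * δ ^ 2 - σd ^ 2)) :
    let f : ℝ → ℝ := fun t =>
      σW ^ 4 * (σe ^ 2 + δ ^ 2 - σd ^ 2) / (t * σd ^ 2 + σW ^ 2) ^ 2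
        + σd ^ 2 * σW ^ 2 / (t * σd ^ 2 + σW ^ 2) + lam * σe ^ 2 * t
    ∃ t > (0 : ℝ), f t < f 0 :=
  exists_lt_of_hasDerivWithinAt_Ioi_neg
    (hasDerivAt_affineEncoderCost_zero σe σd lam δ hσW.ne').hasDerivWithinAt
    (div_neg_of_neg_of_pos (sub_neg.2 h) (by positivity))

theorem stmt3 (σe σd σW lam δ : ℝ)
    (hσe : 0 < σe) (hσd : 0 < σd) (hσW : 0 < σW) (hlam : 0 < lam)
    (h : lam * σe ^ 2 * σW ^ 2 < σd ^ 2 * (2 * σe ^ 2 + 2 * δ ^ 2 - σd ^ 2)) :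
    let f : ℝ → ℝ := fun t =>
      σW ^ 4 * (σe ^ 2 + δ ^ 2 - σd ^ 2) / (t * σd ^ 2 + σW ^ 2) ^ 2
        + σd ^ 2 * σW ^ 2 / (t * σd ^ 2 + σW ^ 2) + lam * σe ^ 2 * t
    ∃ t > (0 : ℝ), f t < f 0 :=
  stmt3_general σe σd σW lam δ hσW h
end

section
/- Let σ_e, σ_d, σ_W > 0, λ > 0, δ ∈ ℝ, and define f : [0,∞) → ℝ by f(t) = σ_W⁴(σ_e² + δ² − σ_d²)/(tσ_d² + σ_W²)² + σ_d²σ_W²/(tσ_d² + σ_W²) + λσ_e²t. Suppose λσ_e²σ_W² ≥ σ_d²(2σ_e² + 2δ² − σ_d²), 3(σ_e² + δ²) < 2σ_d², and 4λσ_e²σ_W²(σ_d² − σ_e² − δ²) ≤ σ_d²(σ_e² + δ²)². Then there exists t > 0 with f(t) = f(0). -/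
/-!
Write `P = σe² + δ²`, `D = σd²`, `W = σW²`. The substitution `u = t D / W` turns the cost into
`normalizedCost P D c u = (P - D) / (1 + u)² + D / (1 + u) + c u` with `c = λ σe² W / D`, which
equals `P` at `u = 0`. Clearing denominators, its difference from `P` is `u / (1 + u)²` times the
quadratic `c u² + (2c - P) u + (c + D - 2P)`, whose discriminant is `P² - 4c(D - P) ≥ 0`. Since
`D - P > P / 2`, this forces `2c < P`, so the linear coefficient is negative and the larger root is
positive.
-/

lemma exists_pos_quadratic_eq_zero {a b k : ℝ} (ha : 0 < a) (hb : b < 0)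
    (hdisc : 0 ≤ discrim a b k) : ∃ x > 0, a * (x * x) + b * x + k = 0 := by
  set s := √(discrim a b k)
  have hs : discrim a b k = s * s := (Real.mul_self_sqrt hdisc).symm
  have hnum : 0 < -b + s := by linarith [Real.sqrt_nonneg (discrim a b k)]
  refine ⟨(-b + s) / (2 * a), by positivity, ?_⟩
  exact (quadratic_eq_zero_iff ha.ne' hs _).mpr (Or.inl rfl)

noncomputable def normalizedCost (P D c u : ℝ) : ℝ :=
  (P - D) / (1 + u) ^ 2 + D / (1 + u) + c * u

lemma normalizedCost_zero (P D c : ℝ) : normalizedCost P D c 0 = P := by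
  simp [normalizedCost]

lemma normalizedCost_sub_eq {u : ℝ} (P D c : ℝ) (hu : 1 + u ≠ 0) :
    normalizedCost P D c u - P
      = u * (c * (u * u) + (2 * c - P) * u + (c + D - 2 * P)) / (1 + u) ^ 2 := by
  unfold normalizedCost
  field_simp
  ring

lemma exists_pos_normalizedCost_eq {P D c : ℝ} (hc : 0 < c) (hP : 0 < P) (hPD : 3 * P < 2 * D)
    (hdisc : 4 * c * (D - P) ≤ P ^ 2) : ∃ u > 0, normalizedCost P D c u = P := by
  have hcP : 2 * c < P := by nlinarith
  obtain ⟨u, hu, hroot⟩ := exists_pos_quadratic_eq_zero (k := c + D - 2 * P) hc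
    (by linarith : 2 * c - P < 0) (by rw [discrim]; linarith)
  refine ⟨u, hu, ?_⟩
  rw [← sub_eq_zero, normalizedCost_sub_eq P D c (by positivity), hroot, mul_zero, zero_div]

lemma cost_eq_normalizedCost {P D W κ t : ℝ} (hD : 0 < D) (hW : 0 < W) (ht : 0 ≤ t) :
    W ^ 2 * (P - D) / (t * D + W) ^ 2 + D * W / (t * D + W) + κ * t
      = normalizedCost P D (κ * W / D) (t * D / W) := by
  unfold normalizedCost
  have : t * D + W ≠ 0 := by positivity
  field_simp
  ring

theorem stmt4_general (σe σd σW lam δ : ℝ)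
    (hσe : 0 < σe) (hσd : 0 < σd) (hσW : 0 < σW) (hlam : 0 < lam)
    (h2 : 3 * (σe ^ 2 + δ ^ 2) < 2 * σd ^ 2)
    (h3 : 4 * lam * σe ^ 2 * σW ^ 2 * (σd ^ 2 - σe ^ 2 - δ ^ 2)
        ≤ σd ^ 2 * (σe ^ 2 + δ ^ 2) ^ 2) :
    let f : ℝ → ℝ := fun t =>
      σW ^ 4 * (σe ^ 2 + δ ^ 2 - σd ^ 2) / (t * σd ^ 2 + σW ^ 2) ^ 2
        + σd ^ 2 * σW ^ 2 / (t * σd ^ 2 + σW ^ 2) + lam * σe ^ 2 * t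
    ∃ t > (0 : ℝ), f t = f 0 := by
  intro f
  set c := lam * σe ^ 2 * σW ^ 2 / σd ^ 2
  have hcost (t : ℝ) (ht : 0 ≤ t) :
      f t = normalizedCost (σe ^ 2 + δ ^ 2) (σd ^ 2) c (t * σd ^ 2 / σW ^ 2) := by
    have := cost_eq_normalizedCost (P := σe ^ 2 + δ ^ 2) (κ := lam * σe ^ 2)
      (pow_pos hσd 2) (pow_pos hσW 2) ht
    rw [← pow_mul] at this
    exact this
  have hdisc : 4 * c * (σd ^ 2 - (σe ^ 2 + δ ^ 2)) ≤ (σe ^ 2 + δ ^ 2) ^ 2 := by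
    simp only [c]
    rw [mul_div_assoc', div_mul_eq_mul_div, div_le_iff₀ (by positivity)]
    linear_combination h3
  obtain ⟨u, hu, hgu⟩ :=
    exists_pos_normalizedCost_eq (by positivity) (by positivity) h2 hdisc
  refine ⟨u * σW ^ 2 / σd ^ 2, by positivity, ?_⟩
  rw [hcost _ (by positivity), hcost 0 le_rfl, zero_mul, zero_div, normalizedCost_zero,
    div_mul_cancel₀ _ (by positivity), mul_div_cancel_right₀ _ (by positivity), hgu]

theorem stmt4 (σe σd σW lam δ : ℝ)
    (hσe : 0 < σe) (hσd : 0 < σd) (hσW : 0 < σW) (hlam : 0 < lam)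
    (h1 : lam * σe ^ 2 * σW ^ 2 ≥ σd ^ 2 * (2 * σe ^ 2 + 2 * δ ^ 2 - σd ^ 2))
    (h2 : 3 * (σe ^ 2 + δ ^ 2) < 2 * σd ^ 2)
    (h3 : 4 * lam * σe ^ 2 * σW ^ 2 * (σd ^ 2 - σe ^ 2 - δ ^ 2)
        ≤ σd ^ 2 * (σe ^ 2 + δ ^ 2) ^ 2) :
    let f : ℝ → ℝ := fun t =>
      σW ^ 4 * (σe ^ 2 + δ ^ 2 - σd ^ 2) / (t * σd ^ 2 + σW ^ 2) ^ 2
        + σd ^ 2 * σW ^ 2 / (t * σd ^ 2 + σW ^ 2) + lam * σe ^ 2 * t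
    ∃ t > (0 : ℝ), f t = f 0 :=
  stmt4_general σe σd σW lam δ hσe hσd hσW hlam h2 h3
end

section
/- Let σ_e, σ_d, σ_W > 0, λ > 0, δ ∈ ℝ, and define f : [0,∞) → ℝ by f(t) = σ_W⁴(σ_e² + δ² − σ_d²)/(tσ_d² + σ_W²)² + σ_d²σ_W²/(tσ_d² + σ_W²) + λσ_e²t. If λσ_e²σ_W² ≥ σ_d²(2σ_e² + 2δ² − σ_d²) and 3(σ_e² + δ²) ≥ 2σ_d², then f(t) > f(0) for all t > 0. -/
/-!
Clearing the denominator, `f t - f 0 = t * p t / (t σd² + σW²)²` for a quadratic `p` whose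
constant term `σW⁴ f'(0)` is `σW²` times the slack in the first hypothesis, whose
leading coefficient `λ σe² σd⁴` is positive, and whose linear coefficient is nonnegative by the
two hypotheses together. Hence `p t > 0` for `t > 0`.
-/

namespace AffineStackelberg

/-- The encoder's cost `f` of the affine policy with gain `A² = t`. -/
noncomputable def encoderCost (σe σd σW lam δ t : ℝ) : ℝ :=
  σW ^ 4 * (σe ^ 2 + δ ^ 2 - σd ^ 2) / (t * σd ^ 2 + σW ^ 2) ^ 2
    + σd ^ 2 * σW ^ 2 / (t * σd ^ 2 + σW ^ 2) + lam * σe ^ 2 * t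

theorem encoderCost_sub_encoderCost_zero {σe σd σW lam δ t : ℝ} (hσW : σW ≠ 0) (ht : 0 ≤ t) :
    encoderCost σe σd σW lam δ t - encoderCost σe σd σW lam δ 0 =
      t * (σW ^ 2 * (lam * σe ^ 2 * σW ^ 2 - σd ^ 2 * (2 * σe ^ 2 + 2 * δ ^ 2 - σd ^ 2))
          + σd ^ 2 * (2 * lam * σe ^ 2 * σW ^ 2 - (σe ^ 2 + δ ^ 2) * σd ^ 2) * t
          + lam * σe ^ 2 * σd ^ 4 * t ^ 2) / (t * σd ^ 2 + σW ^ 2) ^ 2 := by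
  -- in the orientation `field_simp` normalises the denominator to
  have hden : σd ^ 2 * t + σW ^ 2 ≠ 0 := by positivity
  unfold encoderCost
  field_simp
  ring

theorem encoderCost_linearCoeff_nonneg {σe σd σW lam δ : ℝ}
    (h1 : lam * σe ^ 2 * σW ^ 2 ≥ σd ^ 2 * (2 * σe ^ 2 + 2 * δ ^ 2 - σd ^ 2))
    (h2 : 3 * (σe ^ 2 + δ ^ 2) ≥ 2 * σd ^ 2) :
    0 ≤ σd ^ 2 * (2 * lam * σe ^ 2 * σW ^ 2 - (σe ^ 2 + δ ^ 2) * σd ^ 2) := by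
  have key : 2 * lam * σe ^ 2 * σW ^ 2 - (σe ^ 2 + δ ^ 2) * σd ^ 2
      ≥ σd ^ 2 * (3 * (σe ^ 2 + δ ^ 2) - 2 * σd ^ 2) := by
    linarith
  have hslack : 0 ≤ σd ^ 2 * (3 * (σe ^ 2 + δ ^ 2) - 2 * σd ^ 2) :=
    mul_nonneg (sq_nonneg σd) (sub_nonneg.mpr h2)
  exact mul_nonneg (sq_nonneg σd) (hslack.trans key)

theorem quadratic_pos_of_coeff_nonneg {a b c t : ℝ} (ha : 0 ≤ a) (hb : 0 ≤ b) (hc : 0 < c)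
    (ht : 0 < t) : 0 < a + b * t + c * t ^ 2 :=
  add_pos_of_nonneg_of_pos (add_nonneg ha (mul_nonneg hb ht.le)) (mul_pos hc (pow_pos ht 2))

end AffineStackelberg

open AffineStackelberg in
theorem stmt5 (σe σd σW lam δ : ℝ)
    (hσe : 0 < σe) (hσd : 0 < σd) (hσW : 0 < σW) (hlam : 0 < lam)
    (h1 : lam * σe ^ 2 * σW ^ 2 ≥ σd ^ 2 * (2 * σe ^ 2 + 2 * δ ^ 2 - σd ^ 2))
    (h2 : 3 * (σe ^ 2 + δ ^ 2) ≥ 2 * σd ^ 2) :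
    let f : ℝ → ℝ := fun t =>
      σW ^ 4 * (σe ^ 2 + δ ^ 2 - σd ^ 2) / (t * σd ^ 2 + σW ^ 2) ^ 2
        + σd ^ 2 * σW ^ 2 / (t * σd ^ 2 + σW ^ 2) + lam * σe ^ 2 * t
    ∀ t > (0 : ℝ), f t > f 0 := by
  intro f t ht
  have hconst : 0 ≤ σW ^ 2 * (lam * σe ^ 2 * σW ^ 2
      - σd ^ 2 * (2 * σe ^ 2 + 2 * δ ^ 2 - σd ^ 2)) :=
    mul_nonneg (sq_nonneg σW) (sub_nonneg.mpr h1)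
  have hp := quadratic_pos_of_coeff_nonneg hconst (encoderCost_linearCoeff_nonneg h1 h2)
    (by positivity : 0 < lam * σe ^ 2 * σd ^ 4) ht
  show encoderCost σe σd σW lam δ 0 < encoderCost σe σd σW lam δ t
  rw [← sub_pos, encoderCost_sub_encoderCost_zero hσW.ne' ht.le]
  exact div_pos (mul_pos ht hp) (by positivity)
end

section
/- Let σ_e, σ_d, σ_W > 0, λ > 0, δ ∈ ℝ, and define f : [0,∞) → ℝ by f(t) = σ_W⁴(σ_e² + δ² − σ_d²)/(tσ_d² + σ_W²)² + σ_d²σ_W²/(tσ_d² + σ_W²) + λσ_e²t. If λσ_e²σ_W² ≥ σ_d²(2σ_e² + 2δ² − σ_d²), 3(σ_e² + δ²) < 2σ_d², and 4λσ_e²σ_W²(σ_d² − σ_e² − δ²) > σ_d²(σ_e² + δ²)², then f(t) > f(0) for all t > 0. -/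
/-!
Writing `s = σe² + δ²`, `v = σd²`, `W = σW²` and `L = λσe²`, clearing the denominator
`(tv + W)²` gives `f t - f 0 = t · q t / (tv + W)²` for a quadratic `q` with leading
coefficient `L v² > 0` and discriminant `v³ (v s² - 4LW (v - s))`. The last hypothesis makes
this discriminant negative, so `q` is positive everywhere.
-/

theorem quadratic_pos_of_discrim_neg {K : Type*} [Field K] [LinearOrder K] [IsStrictOrderedRing K]
    {a b c : K} (ha : 0 < a) (h : discrim a b c < 0) (x : K) :
    0 < a * (x * x) + b * x + c := by
  have hsq : 4 * a * (a * (x * x) + b * x + c) = (2 * a * x + b) ^ 2 - discrim a b c := by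
    rw [discrim]; ring
  have : 0 < 4 * a * (a * (x * x) + b * x + c) := by
    rw [hsq]; nlinarith [sq_nonneg (2 * a * x + b)]
  exact pos_of_mul_pos_right this (by positivity)

namespace SoftPowerSignaling

noncomputable def cost (s v W L t : ℝ) : ℝ :=
  W ^ 2 * (s - v) / (t * v + W) ^ 2 + v * W / (t * v + W) + L * t

variable {s v W L : ℝ}

theorem cost_zero (hW : W ≠ 0) : cost s v W L 0 = s := by
  simp only [cost, zero_mul, zero_add]
  field_simp
  ring

theorem cost_sub_cost_zero {t : ℝ} (hW : W ≠ 0) (hD : t * v + W ≠ 0) :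
    cost s v W L t - cost s v W L 0 =
      t * (L * v ^ 2 * (t * t) + v * (2 * L * W - s * v) * t + W * (v ^ 2 + L * W - 2 * s * v))
        / (t * v + W) ^ 2 := by
  rw [cost_zero hW, cost, div_add_div _ _ (pow_ne_zero 2 hD) hD, div_add' _ _ _ (by positivity),
    div_sub' (by positivity), div_eq_div_iff (by positivity) (by positivity)]
  ring

theorem discrim_cost_numerator :
    discrim (L * v ^ 2) (v * (2 * L * W - s * v)) (W * (v ^ 2 + L * W - 2 * s * v)) =
      v ^ 3 * (v * s ^ 2 - 4 * L * W * (v - s)) := by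
  rw [discrim]; ring

theorem cost_zero_lt_cost (hv : 0 < v) (hW : 0 < W) (hL : 0 < L)
    (hdisc : v * s ^ 2 < 4 * L * W * (v - s)) {t : ℝ} (ht : 0 < t) :
    cost s v W L 0 < cost s v W L t := by
  have hD : 0 < t * v + W := by positivity
  have hq := quadratic_pos_of_discrim_neg (by positivity : 0 < L * v ^ 2)
    (b := v * (2 * L * W - s * v)) (c := W * (v ^ 2 + L * W - 2 * s * v))
    (by rw [discrim_cost_numerator]; exact mul_neg_of_pos_of_neg (by positivity) (by linarith)) t
  rw [← sub_pos, cost_sub_cost_zero hW.ne' hD.ne']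
  positivity

end SoftPowerSignaling

theorem stmt6_general (σe σd σW lam δ : ℝ)
    (hσe : 0 < σe) (hσd : 0 < σd) (hσW : 0 < σW) (hlam : 0 < lam)
    (h3 : 4 * lam * σe ^ 2 * σW ^ 2 * (σd ^ 2 - σe ^ 2 - δ ^ 2)
        > σd ^ 2 * (σe ^ 2 + δ ^ 2) ^ 2) :
    let f : ℝ → ℝ := fun t =>
      σW ^ 4 * (σe ^ 2 + δ ^ 2 - σd ^ 2) / (t * σd ^ 2 + σW ^ 2) ^ 2
        + σd ^ 2 * σW ^ 2 / (t * σd ^ 2 + σW ^ 2) + lam * σe ^ 2 * t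
    ∀ t > (0 : ℝ), f t > f 0 := by
  intro f t ht
  have hf : ∀ u, f u = SoftPowerSignaling.cost (σe ^ 2 + δ ^ 2) (σd ^ 2) (σW ^ 2) (lam * σe ^ 2) u := fun u => by
    simp only [f, SoftPowerSignaling.cost]; ring
  rw [hf, hf]
  exact SoftPowerSignaling.cost_zero_lt_cost (by positivity) (by positivity) (by positivity) (by linarith) ht

theorem stmt6 (σe σd σW lam δ : ℝ)
    (hσe : 0 < σe) (hσd : 0 < σd) (hσW : 0 < σW) (hlam : 0 < lam)
    (h1 : lam * σe ^ 2 * σW ^ 2 ≥ σd ^ 2 * (2 * σe ^ 2 + 2 * δ ^ 2 - σd ^ 2))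
    (h2 : 3 * (σe ^ 2 + δ ^ 2) < 2 * σd ^ 2)
    (h3 : 4 * lam * σe ^ 2 * σW ^ 2 * (σd ^ 2 - σe ^ 2 - δ ^ 2)
        > σd ^ 2 * (σe ^ 2 + δ ^ 2) ^ 2) :
    let f : ℝ → ℝ := fun t =>
      σW ^ 4 * (σe ^ 2 + δ ^ 2 - σd ^ 2) / (t * σd ^ 2 + σW ^ 2) ^ 2
        + σd ^ 2 * σW ^ 2 / (t * σd ^ 2 + σW ^ 2) + lam * σe ^ 2 * t
    ∀ t > (0 : ℝ), f t > f 0 :=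
  stmt6_general σe σd σW lam δ hσe hσd hσW hlam h3
end

section
/- Let σ_e, σ_d, σ_W > 0, δ ∈ ℝ, P̄ > 0, and define g : [0,∞) → ℝ by g(t) = (tσ_d⁴σ_W² + σ_W⁴(σ_e² + δ²))/(tσ_d² + σ_W²)². If σ_e²/(σ_e² + δ²) − 2σ_e²/σ_d² ≤ P̄/σ_W², then g(P̄/σ_e²) ≤ g(t) for every t ∈ [0, P̄/σ_e²]. -/
/-!
With `a = σd⁴σW²`, `b = σW⁴(σe² + δ²)`, `c = σd²`, `d = σW²` and `T = P̄/σe²`, the cross-multiplied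
difference `g t - g T` factors as `(T - t)` times a quantity that is nonnegative for all `t ≥ 0` exactly
when `a d² ≤ b c (c T + 2 d)`; after clearing denominators this is the hypothesis on `P̄`.
-/

open Set

/-- The function need not be antitone on `[0, T]` (it increases near `0` when `2 b c < a d`). -/
theorem isMinOn_affine_div_sq {a b c d T : ℝ} (ha : 0 ≤ a) (hb : 0 ≤ b) (hc : 0 ≤ c) (hd : 0 < d)
    (H : a * d ^ 2 ≤ b * c * (c * T + 2 * d)) :
    IsMinOn (fun t => (a * t + b) / (c * t + d) ^ 2) (Icc 0 T) T := by
  rw [isMinOn_iff]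
  rintro t ⟨ht, htT⟩
  have hT : 0 ≤ T := ht.trans htT
  have hdenT : 0 < (c * T + d) ^ 2 := by have := mul_nonneg hc hT; positivity
  have hdent : 0 < (c * t + d) ^ 2 := by have := mul_nonneg hc ht; positivity
  have cross : (a * t + b) * (c * T + d) ^ 2 - (a * T + b) * (c * t + d) ^ 2 =
      (T - t) * (a * c ^ 2 * t * T + b * c ^ 2 * t + (b * c * (c * T + 2 * d) - a * d ^ 2)) := by
    ring
  have hcross : 0 ≤ (T - t) *
      (a * c ^ 2 * t * T + b * c ^ 2 * t + (b * c * (c * T + 2 * d) - a * d ^ 2)) :=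
    mul_nonneg (sub_nonneg.2 htT) (add_nonneg (by positivity) (sub_nonneg.2 H))
  rw [div_le_div_iff₀ hdenT hdent]
  linarith

theorem stmt7_general (σe σd σW δ Pbar : ℝ)
    (hσe : 0 < σe) (hσd : 0 < σd) (hσW : 0 < σW)
    (h : σe ^ 2 / (σe ^ 2 + δ ^ 2) - 2 * σe ^ 2 / σd ^ 2 ≤ Pbar / σW ^ 2) :
    let g : ℝ → ℝ := fun t =>
      (t * σd ^ 4 * σW ^ 2 + σW ^ 4 * (σe ^ 2 + δ ^ 2)) / (t * σd ^ 2 + σW ^ 2) ^ 2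
    ∀ t ∈ Set.Icc (0 : ℝ) (Pbar / σe ^ 2), g (Pbar / σe ^ 2) ≤ g t := by
  intro g
  have hg : g = fun t =>
      (σd ^ 4 * σW ^ 2 * t + σW ^ 4 * (σe ^ 2 + δ ^ 2)) / (σd ^ 2 * t + σW ^ 2) ^ 2 := by
    funext t
    simp only [g]
    ring
  have hcond : σd ^ 2 * σW ^ 2 ≤ (σe ^ 2 + δ ^ 2) * (σd ^ 2 * (Pbar / σe ^ 2) + 2 * σW ^ 2) := by
    have hK : 0 < σe ^ 2 + δ ^ 2 := by positivity
    rw [← sub_nonneg] at h ⊢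
    field_simp at h ⊢
    linarith
  rw [← isMinOn_iff, hg]
  refine isMinOn_affine_div_sq (by positivity) (by positivity) (by positivity) (by positivity) ?_
  calc σd ^ 4 * σW ^ 2 * (σW ^ 2) ^ 2 = σd ^ 2 * σW ^ 4 * (σd ^ 2 * σW ^ 2) := by ring
    _ ≤ σd ^ 2 * σW ^ 4 * ((σe ^ 2 + δ ^ 2) * (σd ^ 2 * (Pbar / σe ^ 2) + 2 * σW ^ 2)) := by gcongr
    _ = _ := by ring

theorem stmt7 (σe σd σW δ Pbar : ℝ)
    (hσe : 0 < σe) (hσd : 0 < σd) (hσW : 0 < σW) (hP : 0 < Pbar)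
    (h : σe ^ 2 / (σe ^ 2 + δ ^ 2) - 2 * σe ^ 2 / σd ^ 2 ≤ Pbar / σW ^ 2) :
    let g : ℝ → ℝ := fun t =>
      (t * σd ^ 4 * σW ^ 2 + σW ^ 4 * (σe ^ 2 + δ ^ 2)) / (t * σd ^ 2 + σW ^ 2) ^ 2
    ∀ t ∈ Set.Icc (0 : ℝ) (Pbar / σe ^ 2), g (Pbar / σe ^ 2) ≤ g t :=
  stmt7_general σe σd σW δ Pbar hσe hσd hσW h
end

section
/- Let σ_e, σ_d, σ_W > 0, δ ∈ ℝ, P̄ > 0, and define g : [0,∞) → ℝ by g(t) = (tσ_d⁴σ_W² + σ_W⁴(σ_e² + δ²))/(tσ_d² + σ_W²)². If σ_e²/(σ_e² + δ²) − 2σ_e²/σ_d² > P̄/σ_W², then g(t) > g(0) for every t ∈ (0, P̄/σ_e²]. -/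
/-!
Clearing denominators, `g t - g 0` has the sign of `σd²σW² - (σe² + δ²)(t σd² + 2σW²)`, which
is decreasing in `t`; the hypothesis says it is still positive at the right end `t = P̄/σe²`.
-/

theorem lt_div_add_sq_iff {S a w t : ℝ} (ha : 0 < a) (hw : 0 < w) (ht : 0 < t) :
    S < (t * a ^ 2 * w + w ^ 2 * S) / (t * a + w) ^ 2 ↔ S * (t * a + 2 * w) < a * w := by
  have hdiff : t * a ^ 2 * w + w ^ 2 * S - S * (t * a + w) ^ 2
      = t * a * (a * w - S * (t * a + 2 * w)) := by ring
  rw [lt_div_iff₀ (by positivity), ← sub_pos, hdiff, mul_pos_iff_of_pos_left (by positivity),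
    sub_pos]

theorem mul_add_lt_of_le_div_of_lt {s S a w t P : ℝ} (hs : 0 < s) (hS : 0 < S) (ha : 0 < a)
    (hw : 0 < w) (htP : t ≤ P / s) (h : s / S - 2 * s / a > P / w) :
    S * (t * a + 2 * w) < a * w := by
  have hts : t * s ≤ P := (le_div_iff₀ hs).1 htP
  have hPw : P < (s / S - 2 * s / a) * w := (div_lt_iff₀ hw).1 h
  have hthreshold : t * s < s * (w / S - 2 * w / a) := by
    calc t * s ≤ P := hts
      _ < (s / S - 2 * s / a) * w := hPw
      _ = s * (w / S - 2 * w / a) := by ring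
  have ht : t < w / S - 2 * w / a := by nlinarith
  calc S * (t * a + 2 * w) < S * ((w / S - 2 * w / a) * a + 2 * w) := by gcongr
    _ = a * w := by field_simp; ring

theorem stmt8_general (σe σd σW δ Pbar : ℝ)
    (hσe : 0 < σe) (hσd : 0 < σd) (hσW : 0 < σW)
    (h : σe ^ 2 / (σe ^ 2 + δ ^ 2) - 2 * σe ^ 2 / σd ^ 2 > Pbar / σW ^ 2) :
    let g : ℝ → ℝ := fun t =>
      (t * σd ^ 4 * σW ^ 2 + σW ^ 4 * (σe ^ 2 + δ ^ 2)) / (t * σd ^ 2 + σW ^ 2) ^ 2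
    ∀ t ∈ Set.Ioc (0 : ℝ) (Pbar / σe ^ 2), g t > g 0 := by
  intro g t ⟨ht0, htP⟩
  have hS : 0 < σe ^ 2 + δ ^ 2 := by positivity
  have hg0 : g 0 = σe ^ 2 + δ ^ 2 := by
    simp only [g, zero_mul, zero_add]
    field_simp
  have hgt : g t = (t * (σd ^ 2) ^ 2 * σW ^ 2 + (σW ^ 2) ^ 2 * (σe ^ 2 + δ ^ 2))
      / (t * σd ^ 2 + σW ^ 2) ^ 2 := by
    simp only [g]; ring
  rw [gt_iff_lt, hg0, hgt, lt_div_add_sq_iff (by positivity) (by positivity) ht0]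
  exact mul_add_lt_of_le_div_of_lt (by positivity) hS (by positivity) (by positivity) htP h

theorem stmt8 (σe σd σW δ Pbar : ℝ)
    (hσe : 0 < σe) (hσd : 0 < σd) (hσW : 0 < σW) (hP : 0 < Pbar)
    (h : σe ^ 2 / (σe ^ 2 + δ ^ 2) - 2 * σe ^ 2 / σd ^ 2 > Pbar / σW ^ 2) :
    let g : ℝ → ℝ := fun t =>
      (t * σd ^ 4 * σW ^ 2 + σW ^ 4 * (σe ^ 2 + δ ^ 2)) / (t * σd ^ 2 + σW ^ 2) ^ 2
    ∀ t ∈ Set.Ioc (0 : ℝ) (Pbar / σe ^ 2), g t > g 0 :=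
  stmt8_general σe σd σW δ Pbar hσe hσd hσW h
end

section
/- Let σ_e, σ_d, σ_W > 0, δ ∈ ℝ, and define g : [0,∞) → ℝ by g(t) = (tσ_d⁴σ_W² + σ_W⁴(σ_e² + δ²))/(tσ_d² + σ_W²)². If σ_d² ≤ 2(σ_e² + δ²), then g is nonincreasing on [0,∞), and strictly decreasing on (0,∞). -/
/-!
Writing `g t = (t p + q) / (t r + s) ^ 2`, the cross-multiplied difference `g a - g b` factors as
`(b - a) (p r² a b + q r² (a + b) + s (2 q r - p s))` over positive denominators. The hypothesis
`σ_d² ≤ 2 (σ_e² + δ²)` is exactly `p s ≤ 2 q r`, which makes every term of the second factor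
nonnegative on `[0, ∞)`, and `p r² a b` strictly positive on `(0, ∞)`.
-/

namespace LinearDivSq

def crossFactor (p q r s a b : ℝ) : ℝ :=
  p * r ^ 2 * (a * b) + (q * r ^ 2 * (a + b) + s * (2 * q * r - p * s))

variable {p q r s a b : ℝ}

lemma cross_sub_eq (p q r s a b : ℝ) :
    (a * p + q) * (b * r + s) ^ 2 - (b * p + q) * (a * r + s) ^ 2 =
      (b - a) * crossFactor p q r s a b := by
  unfold crossFactor
  ring

lemma le_crossFactor (hp : 0 ≤ p) (hr : 0 ≤ r) (hs : 0 ≤ s) (hpqrs : p * s ≤ 2 * q * r)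
    (ha : 0 ≤ a) (hb : 0 ≤ b) : p * r ^ 2 * (a * b) ≤ crossFactor p q r s a b := by
  have hqr : 0 ≤ q * r := by nlinarith [mul_nonneg hp hs]
  have hsum : 0 ≤ q * r ^ 2 * (a + b) := by
    rw [show q * r ^ 2 * (a + b) = q * r * (r * (a + b)) by ring]
    positivity
  have hgap : 0 ≤ s * (2 * q * r - p * s) := mul_nonneg hs (by linarith)
  unfold crossFactor
  linarith

lemma le_of_crossFactor_nonneg (hDa : 0 < (a * r + s) ^ 2) (hDb : 0 < (b * r + s) ^ 2) (hab : a ≤ b)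
    (hQ : 0 ≤ crossFactor p q r s a b) :
    (b * p + q) / (b * r + s) ^ 2 ≤ (a * p + q) / (a * r + s) ^ 2 := by
  rw [div_le_div_iff₀ hDb hDa, ← sub_nonneg, cross_sub_eq]
  exact mul_nonneg (sub_nonneg.2 hab) hQ

lemma lt_of_crossFactor_pos (hDa : 0 < (a * r + s) ^ 2) (hDb : 0 < (b * r + s) ^ 2) (hab : a < b)
    (hQ : 0 < crossFactor p q r s a b) :
    (b * p + q) / (b * r + s) ^ 2 < (a * p + q) / (a * r + s) ^ 2 := by
  rw [div_lt_div_iff₀ hDb hDa, ← sub_pos, cross_sub_eq]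
  exact mul_pos (sub_pos.2 hab) hQ

theorem antitoneOn (hp : 0 ≤ p) (hr : 0 ≤ r) (hs : 0 < s) (hpqrs : p * s ≤ 2 * q * r) :
    AntitoneOn (fun t => (t * p + q) / (t * r + s) ^ 2) (Set.Ici 0) := by
  intro a (ha : 0 ≤ a) b (hb : 0 ≤ b) hab
  have hD : ∀ t, 0 ≤ t → 0 < (t * r + s) ^ 2 := fun t ht =>
    pow_pos (add_pos_of_nonneg_of_pos (mul_nonneg ht hr) hs) 2
  refine le_of_crossFactor_nonneg (hD a ha) (hD b hb) hab ?_
  have hpab : 0 ≤ p * r ^ 2 * (a * b) := by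
    have : 0 ≤ a * b := mul_nonneg ha hb
    positivity
  exact hpab.trans (le_crossFactor hp hr hs.le hpqrs ha hb)

theorem strictAntiOn (hp : 0 < p) (hr : 0 < r) (hs : 0 ≤ s) (hpqrs : p * s ≤ 2 * q * r) :
    StrictAntiOn (fun t => (t * p + q) / (t * r + s) ^ 2) (Set.Ioi 0) := by
  intro a (ha : 0 < a) b (hb : 0 < b) hab
  have hD : ∀ t, 0 < t → 0 < (t * r + s) ^ 2 := fun t ht =>
    pow_pos (add_pos_of_pos_of_nonneg (mul_pos ht hr) hs) 2
  refine lt_of_crossFactor_pos (hD a ha) (hD b hb) hab ?_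
  have hpab : 0 < p * r ^ 2 * (a * b) := by positivity
  exact hpab.trans_le (le_crossFactor hp.le hr.le hs hpqrs ha.le hb.le)

end LinearDivSq

theorem stmt9_general (σe σd σW δ : ℝ)
    (hσd : 0 < σd) (hσW : 0 < σW)
    (h : σd ^ 2 ≤ 2 * (σe ^ 2 + δ ^ 2)) :
    let g : ℝ → ℝ := fun t =>
      (t * σd ^ 4 * σW ^ 2 + σW ^ 4 * (σe ^ 2 + δ ^ 2)) / (t * σd ^ 2 + σW ^ 2) ^ 2
    AntitoneOn g (Set.Ici (0 : ℝ)) ∧ StrictAntiOn g (Set.Ioi (0 : ℝ)) := by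
  intro g
  have hg : g = fun t => (t * (σd ^ 4 * σW ^ 2) + σW ^ 4 * (σe ^ 2 + δ ^ 2)) /
      (t * σd ^ 2 + σW ^ 2) ^ 2 := by
    funext t
    simp only [g, mul_assoc]
  have hpqrs : σd ^ 4 * σW ^ 2 * σW ^ 2 ≤ 2 * (σW ^ 4 * (σe ^ 2 + δ ^ 2)) * σd ^ 2 := by
    have := mul_le_mul_of_nonneg_left h (by positivity : 0 ≤ σd ^ 2 * σW ^ 4)
    linear_combination this
  rw [hg]
  exact ⟨LinearDivSq.antitoneOn (by positivity) (by positivity) (by positivity) hpqrs,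
    LinearDivSq.strictAntiOn (by positivity) (by positivity) (by positivity) hpqrs⟩

theorem stmt9 (σe σd σW δ : ℝ)
    (hσe : 0 < σe) (hσd : 0 < σd) (hσW : 0 < σW)
    (h : σd ^ 2 ≤ 2 * (σe ^ 2 + δ ^ 2)) :
    let g : ℝ → ℝ := fun t =>
      (t * σd ^ 4 * σW ^ 2 + σW ^ 4 * (σe ^ 2 + δ ^ 2)) / (t * σd ^ 2 + σW ^ 2) ^ 2
    AntitoneOn g (Set.Ici (0 : ℝ)) ∧ StrictAntiOn g (Set.Ioi (0 : ℝ)) :=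
  stmt9_general σe σd σW δ hσd hσW h
end

section
/- Let λ > 0 and σ_d, σ_W > 0. There exist real numbers A ≠ 0 and K satisfying the pair of equations A = K/(K² + λ) and K = Aσ_d²/(A²σ_d² + σ_W²) if and only if λσ_W² < σ_d². Moreover, when λσ_W² < σ_d², every such solution satisfies A² = √(σ_W²/(λσ_d²)) − σ_W²/σ_d² and K = Aσ_d√λ/σ_W. -/
/-!
Clearing denominators and eliminating `A σd² K` between the two equations gives
`K² σW² = λ σd² A²`, while `A K = A² (K² + λ) > 0` fixes the sign, so `K = c A` with
`c = σd √λ / σW`. The encoder equation then collapses to `c² A² + λ = c`, which has a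
solution `A ≠ 0` exactly when `λ < c`, i.e. when `λ σW² < σd²`.
-/

/-- The encoder `x = A m - A μ_d` and decoder `u = K y + μ_d` are mutual best responses
(the offsets `C = -A μ_d`, `L = μ_d` are forced, so only the gains remain). -/
def IsAffineNash (lam σd σW A K : ℝ) : Prop :=
  A = K / (K ^ 2 + lam) ∧ K = A * σd ^ 2 / (A ^ 2 * σd ^ 2 + σW ^ 2)

section

variable {lam σd σW c A K : ℝ}

theorem isAffineNash_iff_mul_eq (hlam : 0 < lam) (hσW : σW ≠ 0) :
    IsAffineNash lam σd σW A K ↔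
      A * (K ^ 2 + lam) = K ∧ K * (A ^ 2 * σd ^ 2 + σW ^ 2) = A * σd ^ 2 := by
  have hK : K ^ 2 + lam ≠ 0 := by positivity
  have hA : A ^ 2 * σd ^ 2 + σW ^ 2 ≠ 0 := by positivity
  rw [IsAffineNash, eq_div_iff hK, eq_div_iff hA]

theorem isAffineNash_iff (hlam : 0 < lam) (hσW : σW ≠ 0) (hc : 0 < c)
    (hcσ : c ^ 2 * σW ^ 2 = lam * σd ^ 2) (hA : A ≠ 0) :
    IsAffineNash lam σd σW A K ↔ K = c * A ∧ c ^ 2 * A ^ 2 + lam = c := by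
  rw [isAffineNash_iff_mul_eq hlam hσW]
  constructor
  · rintro ⟨hEnc, hDec⟩
    have hsq : K ^ 2 = (c * A) ^ 2 := mul_right_cancel₀ (pow_ne_zero 2 hσW) <| by
      linear_combination K * hDec - A * σd ^ 2 * hEnc - A ^ 2 * hcσ
    have hAK : 0 < A * K := by
      rw [← hEnc, ← mul_assoc, ← sq]
      positivity
    have hK : K = c * A := by
      refine (sq_eq_sq_iff_eq_or_eq_neg.mp hsq).resolve_right fun hneg => ?_
      have : 0 < c * A ^ 2 := by positivity
      rw [hneg] at hAK
      linarith
    refine ⟨hK, mul_left_cancel₀ hA ?_⟩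
    rw [hK] at hEnc
    linear_combination hEnc
  · rintro ⟨rfl, h⟩
    refine ⟨by linear_combination A * h, mul_left_cancel₀ hc.ne' ?_⟩
    linear_combination A * σd ^ 2 * h + A * hcσ

theorem exists_isAffineNash_iff (hlam : 0 < lam) (hσW : σW ≠ 0) (hc : 0 < c)
    (hcσ : c ^ 2 * σW ^ 2 = lam * σd ^ 2) :
    (∃ A K, A ≠ 0 ∧ IsAffineNash lam σd σW A K) ↔ lam < c := by
  constructor
  · rintro ⟨A, K, hA, h⟩
    obtain ⟨-, hEnc⟩ := (isAffineNash_iff hlam hσW hc hcσ hA).mp h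
    have : 0 < c ^ 2 * A ^ 2 := by positivity
    linarith
  · intro hlt
    have hA : √(c - lam) / c ≠ 0 := by
      have : 0 < √(c - lam) := Real.sqrt_pos.mpr (sub_pos.mpr hlt)
      positivity
    refine ⟨_, _, hA, (isAffineNash_iff hlam hσW hc hcσ hA).mpr ⟨rfl, ?_⟩⟩
    rw [div_pow, Real.sq_sqrt (sub_pos.mpr hlt).le]
    field_simp
    ring

end

theorem stmt11 (lam σd σW : ℝ) (hlam : 0 < lam) (hσd : 0 < σd) (hσW : 0 < σW) :
    ((∃ A K : ℝ, A ≠ 0 ∧ A = K / (K ^ 2 + lam)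
        ∧ K = A * σd ^ 2 / (A ^ 2 * σd ^ 2 + σW ^ 2))
      ↔ lam * σW ^ 2 < σd ^ 2)
    ∧ (lam * σW ^ 2 < σd ^ 2 →
        ∀ A K : ℝ, A ≠ 0 → A = K / (K ^ 2 + lam)
          → K = A * σd ^ 2 / (A ^ 2 * σd ^ 2 + σW ^ 2)
          → A ^ 2 = Real.sqrt (σW ^ 2 / (lam * σd ^ 2)) - σW ^ 2 / σd ^ 2
            ∧ K = A * σd * Real.sqrt lam / σW) := by
  obtain ⟨s, hs, rfl⟩ : ∃ s, 0 < s ∧ lam = s ^ 2 :=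
    ⟨√lam, Real.sqrt_pos.mpr hlam, (Real.sq_sqrt hlam.le).symm⟩
  have hc : 0 < σd * s / σW := by positivity
  have hcσ : (σd * s / σW) ^ 2 * σW ^ 2 = s ^ 2 * σd ^ 2 := by field_simp
  have hsqrt : √(σW ^ 2 / (s ^ 2 * σd ^ 2)) = σW / (s * σd) := by
    rw [← mul_pow, ← div_pow, Real.sqrt_sq (by positivity)]
  have hcond : s ^ 2 < σd * s / σW ↔ s ^ 2 * σW ^ 2 < σd ^ 2 := by
    rw [lt_div_iff₀ hσW, ← mul_pow, pow_lt_pow_iff_left₀ (by positivity) hσd.le two_ne_zero]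
    constructor <;> intro h <;> nlinarith
  rw [Real.sqrt_sq hs.le, hsqrt]
  refine ⟨(exists_isAffineNash_iff (by positivity) hσW.ne' hc hcσ).trans hcond,
    fun _ A K hA hEnc hDec => ?_⟩
  obtain ⟨hK, hA2⟩ :=
    (isAffineNash_iff (by positivity) hσW.ne' hc hcσ hA).mp ⟨hEnc, hDec⟩
  refine ⟨?_, by rw [hK]; ring⟩
  field_simp at hA2 ⊢
  linear_combination hA2
end

section
/- Let σ_e, σ_d, σ_W > 0, λ > 0 with λσ_W² < σ_d², μ_e, μ_d ∈ ℝ, δ = μ_e − μ_d. Set γ = √(√(σ_W²/(λσ_d²)) − σ_W²/σ_d²), A = γ, K = γσ_d√λ/σ_W, and for (m,w) ∈ ℝ² define U(m,w) = K(A(m − μ_d) + w) + μ_d. Then: (i) the integral of (m − U(m,w))² + λA²(m − μ_d)² with respect to (gaussianReal μ_e σ_e²) ⊗ (gaussianReal 0 σ_W²) equals √(λσ_d²σ_W²)·(σ_e² + σ_d² + δ²)/σ_d² − λσ_W²; and (ii) the integral of (m − U(m,w))² with respect to (gaussianReal μ_d σ_d²) ⊗ (gaussianReal 0 σ_W²)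 equals √(λσ_d²σ_W²). -/
open MeasureTheory ProbabilityTheory
open scoped NNReal

/-!
Under the product measure the source `p.1` and the noise `p.2` are independent and the noise is
centred, so the mean-square error of the affine decoder `U` is a quadratic form in the second
moments `σ² + (mean - μd)²` of the source and `σW²` of the noise, with no cross term. The rest is
algebra: writing `λ = s²`, the gain satisfies `γ² = σW / (σd s) - σW² / σd²` (the condition
`λ σW² < σd²` makes the radicand nonnegative), whence `1 - K A = s σW / σd` and
`K² = s σd / σW - s²`.
-/

section Moments

variable {Ω Ω' : Type*} {mΩ : MeasurableSpace Ω} {mΩ' : MeasurableSpace Ω'}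
  {μ : Measure Ω} {ν : Measure Ω'} [IsProbabilityMeasure μ] [IsProbabilityMeasure ν]

lemma integral_sq_eq_variance_add_sq {X : Ω → ℝ} (hX : MemLp X 2 μ) :
    ∫ ω, X ω ^ 2 ∂μ = Var[X; μ] + (∫ ω, X ω ∂μ) ^ 2 := by
  rw [variance_eq_sub hX]
  simp

lemma integral_add_prod {X : Ω → ℝ} {Y : Ω' → ℝ} (hX : Integrable X μ) (hY : Integrable Y ν) :
    ∫ p, (X p.1 + Y p.2) ∂μ.prod ν = ∫ ω, X ω ∂μ + ∫ ω', Y ω' ∂ν := by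
  rw [integral_add (hX.comp_fst ν) (hY.comp_snd μ), integral_fun_fst, integral_fun_snd]
  simp

lemma integral_add_sq_prod {X : Ω → ℝ} {Y : Ω' → ℝ} (hX : MemLp X 2 μ) (hY : MemLp Y 2 ν)
    (hY₀ : ∫ ω', Y ω' ∂ν = 0) :
    ∫ p, (X p.1 + Y p.2) ^ 2 ∂μ.prod ν = ∫ ω, X ω ^ 2 ∂μ + ∫ ω', Y ω' ^ 2 ∂ν := by
  have hXY : MemLp (fun p : Ω × Ω' => X p.1 + Y p.2) 2 (μ.prod ν) :=
    (hX.comp_fst ν).add (hY.comp_snd μ)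
  rw [integral_sq_eq_variance_add_sq hXY, variance_add_prod hX hY,
    integral_add_prod (hX.integrable one_le_two) (hY.integrable one_le_two),
    integral_sq_eq_variance_add_sq hX, integral_sq_eq_variance_add_sq hY, hY₀]
  ring

end Moments

lemma integral_sub_sq_gaussianReal (m c : ℝ) (v : ℝ≥0) :
    ∫ x, (x - c) ^ 2 ∂gaussianReal m v = v + (m - c) ^ 2 := by
  have hX : MemLp (fun x => x - c) 2 (gaussianReal m v) :=
    (memLp_id_gaussianReal 2).sub (memLp_const c)
  have hint : Integrable (fun x : ℝ => x) (gaussianReal m v) :=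
    (memLp_id_gaussianReal 1).integrable le_rfl
  rw [integral_sq_eq_variance_add_sq hX, variance_sub_const (by fun_prop),
    variance_fun_id_gaussianReal, integral_sub hint (integrable_const c),
    integral_id_gaussianReal]
  simp

-- The variances are written with the anonymous constructor `⟨v, hv⟩ : ℝ≥0`, as in the main
-- theorem, so that this lemma rewrites there syntactically (`NNReal.mk` would not match).
lemma integral_quadratic_gaussianReal_prod (m c a b e : ℝ) {v w : ℝ} (hv : 0 ≤ v) (hw : 0 ≤ w) :
    ∫ p, ((a * (p.1 - c) + b * p.2) ^ 2 + e * (p.1 - c) ^ 2)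
        ∂(gaussianReal m ⟨v, hv⟩).prod (gaussianReal 0 ⟨w, hw⟩)
      = (a ^ 2 + e) * (v + (m - c) ^ 2) + b ^ 2 * w := by
  set V : ℝ≥0 := ⟨v, hv⟩
  set W : ℝ≥0 := ⟨w, hw⟩
  have hX : MemLp (fun x => a * (x - c)) 2 (gaussianReal m V) :=
    ((memLp_id_gaussianReal 2).sub (memLp_const c)).const_mul a
  have hY : MemLp (fun y => b * y) 2 (gaussianReal 0 W) :=
    (memLp_id_gaussianReal 2).const_mul b
  have hY₀ : ∫ y, b * y ∂gaussianReal 0 W = 0 := by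
    rw [integral_const_mul, integral_id_gaussianReal, mul_zero]
  have hsq : Integrable (fun x => e * (x - c) ^ 2) (gaussianReal m V) :=
    (((memLp_id_gaussianReal 2).sub (memLp_const c)).integrable_sq).const_mul e
  have hXY : MemLp (fun p : ℝ × ℝ => a * (p.1 - c) + b * p.2) 2
      ((gaussianReal m V).prod (gaussianReal 0 W)) := (hX.comp_fst _).add (hY.comp_snd _)
  rw [integral_add hXY.integrable_sq (hsq.comp_fst _),
    integral_add_sq_prod hX hY hY₀, integral_fun_fst (fun x => e * (x - c) ^ 2)]
  simp only [mul_pow, integral_const_mul, probReal_univ, one_smul]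
  have h0 := integral_sub_sq_gaussianReal 0 0 W
  simp only [sub_zero] at h0
  have hV : (V : ℝ) = v := rfl
  have hW : (W : ℝ) = w := rfl
  rw [integral_sub_sq_gaussianReal, h0, hV, hW]
  ring

lemma sq_equilibrium_gain {σd σW lam : ℝ} (hσd : 0 < σd) (hσW : 0 < σW) (hlam : 0 < lam)
    (hcond : lam * σW ^ 2 < σd ^ 2) :
    Real.sqrt (Real.sqrt (σW ^ 2 / (lam * σd ^ 2)) - σW ^ 2 / σd ^ 2) ^ 2
      = σW / (σd * Real.sqrt lam) - σW ^ 2 / σd ^ 2 := by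
  have hs : 0 < Real.sqrt lam := Real.sqrt_pos.2 hlam
  have hs2 : Real.sqrt lam ^ 2 = lam := Real.sq_sqrt hlam.le
  have hroot : Real.sqrt (σW ^ 2 / (lam * σd ^ 2)) = σW / (σd * Real.sqrt lam) := by
    rw [Real.sqrt_eq_iff_eq_sq (by positivity) (by positivity), div_pow, mul_pow, hs2, mul_comm]
  have hsW : Real.sqrt lam * σW < σd := by
    refine lt_of_pow_lt_pow_left₀ 2 hσd.le ?_
    rwa [mul_pow, hs2]
  rw [hroot, Real.sq_sqrt]
  rw [sub_nonneg, div_le_div_iff₀ (by positivity) (by positivity)]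
  nlinarith [mul_lt_mul_of_pos_left hsW (mul_pos hσW hσd)]

lemma equilibrium_gain_identities {σd σW s γ : ℝ} (hσd : 0 < σd) (hσW : 0 < σW) (hs : 0 < s)
    (hγ : γ ^ 2 = σW / (σd * s) - σW ^ 2 / σd ^ 2) :
    1 - γ * σd * s / σW * γ = s * σW / σd ∧ (γ * σd * s / σW) ^ 2 = s * σd / σW - s ^ 2 := by
  constructor
  · rw [show γ * σd * s / σW * γ = γ ^ 2 * σd * s / σW by ring, hγ]
    field_simp
    ring
  · rw [div_pow, mul_pow, mul_pow, hγ]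
    field_simp

theorem stmt12_general (σe σd σW lam μe μd : ℝ)
    (hσd : 0 < σd) (hσW : 0 < σW) (hlam : 0 < lam)
    (hcond : lam * σW ^ 2 < σd ^ 2) :
    let δ : ℝ := μe - μd
    let γ : ℝ := Real.sqrt (Real.sqrt (σW ^ 2 / (lam * σd ^ 2)) - σW ^ 2 / σd ^ 2)
    let A : ℝ := γ
    let K : ℝ := γ * σd * Real.sqrt lam / σW
    let U : ℝ × ℝ → ℝ := fun p => K * (A * (p.1 - μd) + p.2) + μd
    (∫ p, ((p.1 - U p) ^ 2 + lam * A ^ 2 * (p.1 - μd) ^ 2)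
        ∂((gaussianReal μe ⟨σe ^ 2, sq_nonneg σe⟩).prod
            (gaussianReal 0 ⟨σW ^ 2, sq_nonneg σW⟩))
      = Real.sqrt (lam * σd ^ 2 * σW ^ 2) * (σe ^ 2 + σd ^ 2 + δ ^ 2) / σd ^ 2
        - lam * σW ^ 2)
    ∧ (∫ p, (p.1 - U p) ^ 2
        ∂((gaussianReal μd ⟨σd ^ 2, sq_nonneg σd⟩).prod
            (gaussianReal 0 ⟨σW ^ 2, sq_nonneg σW⟩))
      = Real.sqrt (lam * σd ^ 2 * σW ^ 2)) := by
  obtain ⟨s, hs, rfl⟩ : ∃ s, 0 < s ∧ lam = s ^ 2 :=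
    ⟨Real.sqrt lam, Real.sqrt_pos.2 hlam, (Real.sq_sqrt hlam.le).symm⟩
  intro δ γ A K U
  have hγ : γ ^ 2 = σW / (σd * s) - σW ^ 2 / σd ^ 2 := by
    rw [sq_equilibrium_gain hσd hσW hlam hcond, Real.sqrt_sq hs.le]
  have hK : γ * σd * s / σW = K := by simp only [K, Real.sqrt_sq hs.le]
  obtain ⟨hKA, hK2⟩ := equilibrium_gain_identities hσd hσW hs hγ
  rw [hK] at hKA hK2
  have hroot : Real.sqrt (s ^ 2 * σd ^ 2 * σW ^ 2) = s * σd * σW := by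
    rw [← mul_pow, ← mul_pow, Real.sqrt_sq (by positivity)]
  have hU : ∀ p : ℝ × ℝ, p.1 - U p = (1 - K * γ) * (p.1 - μd) + (-K) * p.2 := fun p => by
    simp only [U, A]
    ring
  simp_rw [hU]
  constructor
  · rw [integral_quadratic_gaussianReal_prod μe μd _ _ (s ^ 2 * A ^ 2) (sq_nonneg σe),
      hroot, neg_sq, hKA, hK2, hγ]
    simp only [δ]
    field_simp
    ring
  · have h := integral_quadratic_gaussianReal_prod μd μd (1 - K * γ) (-K) 0
      (sq_nonneg σd) (sq_nonneg σW)
    simp only [zero_mul, add_zero] at h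
    rw [h, hroot, neg_sq, hKA, hK2, sub_self]
    field_simp
    ring

theorem stmt12 (σe σd σW lam μe μd : ℝ)
    (hσe : 0 < σe) (hσd : 0 < σd) (hσW : 0 < σW) (hlam : 0 < lam)
    (hcond : lam * σW ^ 2 < σd ^ 2) :
    let δ : ℝ := μe - μd
    let γ : ℝ := Real.sqrt (Real.sqrt (σW ^ 2 / (lam * σd ^ 2)) - σW ^ 2 / σd ^ 2)
    let A : ℝ := γ
    let K : ℝ := γ * σd * Real.sqrt lam / σW
    let U : ℝ × ℝ → ℝ := fun p => K * (A * (p.1 - μd) + p.2) + μd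
    (∫ p, ((p.1 - U p) ^ 2 + lam * A ^ 2 * (p.1 - μd) ^ 2)
        ∂((gaussianReal μe ⟨σe ^ 2, sq_nonneg σe⟩).prod
            (gaussianReal 0 ⟨σW ^ 2, sq_nonneg σW⟩))
      = Real.sqrt (lam * σd ^ 2 * σW ^ 2) * (σe ^ 2 + σd ^ 2 + δ ^ 2) / σd ^ 2
        - lam * σW ^ 2)
    ∧ (∫ p, (p.1 - U p) ^ 2
        ∂((gaussianReal μd ⟨σd ^ 2, sq_nonneg σd⟩).prod
            (gaussianReal 0 ⟨σW ^ 2, sq_nonneg σW⟩))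
      = Real.sqrt (lam * σd ^ 2 * σW ^ 2)) :=
  stmt12_general σe σd σW lam μe μd hσd hσW hlam hcond
end
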